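/- arXiv:2105.03795 — 5 statements merged into one kernel-verified Lean document; each statement's English description precedes it below -/
import Mathlib

section
/- For any integers N ≥ 1 and 0 ≤ M ≤ N and any real number γ, the sum over all 0-1 sequences ζ = (ζ_1,...,ζ_N) ∈ {0,1}^N with Σ ζ_i = M of des(ζ)! · (γ + des(ζ) + 1)_{M - des(ζ)} equals (γ + 1 + N - M)_M, where des(ζ) is the number of descents (occurrences of the consecutive substring '10') in ζ and (a)_q denotes the rising Pochhammer symbol. -/
/-- Extend a 0-1 sequence `ζ : Fin N → Bool` to all of `ℕ` by `false`. -/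
def extSeq {N : ℕ} (ζ : Fin N → Bool) (i : ℕ) : Bool :=
  if h : i < N then ζ ⟨i, h⟩ else false

/-- Number of ones of a 0-1 sequence. -/
def onesCount {N : ℕ} (ζ : Fin N → Bool) : ℕ :=
  (Finset.univ.filter (fun i : Fin N => ζ i = true)).card

/-- Number of descents (occurrences of the consecutive substring `10`)
of a 0-1 sequence `ζ = (ζ_1, …, ζ_N)`. -/
def descCount {N : ℕ} (ζ : Fin N → Bool) : ℕ :=
  ((Finset.range (N - 1)).filter
    (fun i => extSeq ζ i = true ∧ extSeq ζ (i + 1) = false)).card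

open Finset

lemma extSeq_cons_succ {N : ℕ} (b : Bool) (ζ : Fin N → Bool) (i : ℕ) :
    extSeq (Fin.cons b ζ) (i + 1) = extSeq ζ i := by
  unfold extSeq
  by_cases h : i < N
  · rw [dif_pos h, dif_pos (by omega : i + 1 < N + 1)]
    exact Fin.cons_succ (α := fun _ => Bool) b ζ ⟨i, h⟩
  · rw [dif_neg h, dif_neg (by omega)]

lemma extSeq_cons_zero {N : ℕ} (b : Bool) (ζ : Fin N → Bool) :
    extSeq (Fin.cons b ζ) 0 = b := by
  unfold extSeq
  rw [dif_pos (by omega : 0 < N + 1)]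
  exact Fin.cons_zero (α := fun _ => Bool) b ζ

lemma onesCount_eq_sum {N : ℕ} (ζ : Fin N → Bool) :
    onesCount ζ = ∑ i, if ζ i = true then 1 else 0 := by
  rw [onesCount, card_filter]

lemma onesCount_cons {N : ℕ} (b : Bool) (ζ : Fin N → Bool) :
    onesCount (Fin.cons b ζ) = (if b = true then 1 else 0) + onesCount ζ := by
  rw [onesCount_eq_sum, onesCount_eq_sum, Fin.sum_univ_succ]
  simp

lemma descCount_eq_sum {N : ℕ} (ζ : Fin N → Bool) :
    descCount ζ = ∑ i ∈ range (N - 1),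
      if extSeq ζ i = true ∧ extSeq ζ (i + 1) = false then 1 else 0 := by
  rw [descCount, card_filter]

lemma descCount_cons {N : ℕ} (b : Bool) (ζ : Fin N → Bool) :
    descCount (Fin.cons b ζ) =
      descCount ζ + (if b = true ∧ extSeq ζ 0 = false ∧ 0 < N then 1 else 0) := by
  rcases N with _ | m
  · simp [descCount]
  · rw [descCount_eq_sum, descCount_eq_sum]
    have h1 : m + 1 + 1 - 1 = m + 1 := rfl
    rw [h1, sum_range_succ']
    simp only [extSeq_cons_succ, extSeq_cons_zero]
    have h2 : m + 1 - 1 = m := rfl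
    rw [h2]
    congr 1
    simp [Nat.succ_pos]

/-- total count -/
def cnt (N M d : ℕ) : ℕ :=
  (Finset.univ.filter (fun ζ : Fin N → Bool => onesCount ζ = M ∧ descCount ζ = d)).card

/-- count with first (extended) bit `true` -/
def cntT (N M d : ℕ) : ℕ :=
  (Finset.univ.filter (fun ζ : Fin N → Bool =>
    onesCount ζ = M ∧ descCount ζ = d ∧ extSeq ζ 0 = true)).card

/-- count with first (extended) bit `false` -/
def cntF (N M d : ℕ) : ℕ :=
  (Finset.univ.filter (fun ζ : Fin N → Bool =>
    onesCount ζ = M ∧ descCount ζ = d ∧ extSeq ζ 0 = false)).card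

lemma card_cons_split {N : ℕ} (P : (Fin (N + 1) → Bool) → Prop) [DecidablePred P] :
    (Finset.univ.filter P).card
      = (Finset.univ.filter (fun ζ : Fin N → Bool => P (Fin.cons false ζ))).card
      + (Finset.univ.filter (fun ζ : Fin N → Bool => P (Fin.cons true ζ))).card := by
  classical
  simp only [card_filter]
  rw [← Fintype.sum_equiv (Fin.consEquiv (fun _ : Fin (N + 1) => Bool))
    (fun p : Bool × (Fin N → Bool) => if P (Fin.cons p.1 p.2) then 1 else 0)
    (fun ζ => if P ζ then 1 else 0) (fun p => rfl)]
  rw [Fintype.sum_prod_type, Fintype.sum_bool]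
  exact add_comm _ _

lemma cnt_split (N M d : ℕ) : cnt N M d = cntF N M d + cntT N M d := by
  classical
  rw [cnt, cntF, cntT, ← Finset.card_filter_add_card_filter_not
    (p := fun ζ : Fin N → Bool => extSeq ζ 0 = false)]
  simp only [Finset.filter_filter]
  congr 2
  · ext ζ
    simp only [Finset.mem_filter]
    tauto
  · ext ζ
    simp only [Finset.mem_filter, Bool.not_eq_false]
    tauto

lemma onesCount_fin0 (ζ : Fin 0 → Bool) : onesCount ζ = 0 := by
  simp [onesCount]

lemma descCount_fin0 (ζ : Fin 0 → Bool) : descCount ζ = 0 := by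
  simp [descCount]

lemma cnt_zero (M d : ℕ) : cnt 0 M d = if M = 0 ∧ d = 0 then 1 else 0 := by
  rw [cnt]
  by_cases h : M = 0 ∧ d = 0
  · rw [if_pos h]
    rw [Finset.filter_true_of_mem (fun ζ _ => by
      rw [onesCount_fin0, descCount_fin0]; omega)]
    simp [Finset.card_univ]
  · rw [if_neg h, Finset.card_eq_zero, Finset.filter_eq_empty_iff]
    intro ζ _
    rw [onesCount_fin0, descCount_fin0]
    omega

lemma cntT_zero_ones (N d : ℕ) : cntT (N + 1) 0 d = 0 := by
  rw [cntT, Finset.card_eq_zero]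
  rw [Finset.filter_eq_empty_iff]
  rintro ζ -
  rintro ⟨h1, -, h3⟩
  have h0 : ζ ⟨0, Nat.succ_pos N⟩ = true := by
    rw [extSeq, dif_pos (Nat.succ_pos N)] at h3; exact h3
  rw [onesCount, Finset.card_eq_zero, Finset.filter_eq_empty_iff] at h1
  exact h1 (Finset.mem_univ _) h0

lemma cntF_succ (N M d : ℕ) : cntF (N + 1) M d = cnt N M d := by
  rw [cntF, cnt, card_cons_split]
  have h1 : (Finset.univ.filter (fun ζ : Fin N → Bool =>
      onesCount (Fin.cons true ζ) = M ∧ descCount (Fin.cons true ζ) = d ∧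
        extSeq (Fin.cons true ζ) 0 = false)).card = 0 := by
    rw [Finset.card_eq_zero, Finset.filter_eq_empty_iff]
    intro ζ _
    simp [extSeq_cons_zero]
  rw [h1, add_zero]
  congr 1
  apply Finset.filter_congr
  intro ζ _
  simp [onesCount_cons, descCount_cons, extSeq_cons_zero]

lemma cntT_one (M d : ℕ) : cntT 1 (M + 1) d = cnt 0 M d := by
  rw [cntT, cnt, card_cons_split]
  have h1 : (Finset.univ.filter (fun ζ : Fin 0 → Bool =>
      onesCount (Fin.cons false ζ) = M + 1 ∧ descCount (Fin.cons false ζ) = d ∧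
        extSeq (Fin.cons false ζ) 0 = true)).card = 0 := by
    rw [Finset.card_eq_zero, Finset.filter_eq_empty_iff]
    intro ζ _
    simp [extSeq_cons_zero]
  rw [h1, zero_add]
  congr 1
  apply Finset.filter_congr
  intro ζ _
  simp only [onesCount_cons, descCount_cons, extSeq_cons_zero]
  simp
  omega

lemma cntT_succ (N M d : ℕ) (hN : 0 < N) :
    cntT (N + 1) (M + 1) d =
      (match d with
        | 0 => 0
        | e + 1 => cntF N M e) + cntT N M d := by
  classical
  rw [cntT, card_cons_split]
  have h1 : (Finset.univ.filter (fun ζ : Fin N → Bool =>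
      onesCount (Fin.cons false ζ) = M + 1 ∧ descCount (Fin.cons false ζ) = d ∧
        extSeq (Fin.cons false ζ) 0 = true)).card = 0 := by
    rw [Finset.card_eq_zero, Finset.filter_eq_empty_iff]
    intro ζ _
    simp [extSeq_cons_zero]
  rw [h1, zero_add]
  rw [← Finset.card_filter_add_card_filter_not
    (p := fun ζ : Fin N → Bool => extSeq ζ 0 = false)]
  simp only [Finset.filter_filter]
  congr 1
  · -- first-bit-of-tail false part
    rcases d with _ | e
    · show _ = 0
      rw [Finset.card_eq_zero, Finset.filter_eq_empty_iff]
      intro ζ _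
      cases h : extSeq ζ 0 <;>
        simp [onesCount_cons, descCount_cons, extSeq_cons_zero, h, hN]
    · show _ = cntF N M e
      unfold cntF
      refine congrArg Finset.card ?_
      apply Finset.filter_congr
      intro ζ _
      cases h : extSeq ζ 0 <;>
        simp [onesCount_cons, descCount_cons, extSeq_cons_zero, h, hN] <;> omega
  · -- first-bit-of-tail true part
    unfold cntT
    refine congrArg Finset.card ?_
    apply Finset.filter_congr
    intro ζ _
    cases h : extSeq ζ 0 <;>
      simp [onesCount_cons, descCount_cons, extSeq_cons_zero, h, hN] <;> omega

/-- auxiliary: `C(K-1, d-1)` with correct boundary behaviour -/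
def ffK : ℕ → ℕ → ℕ
  | 0, 0 => 1
  | 0, _ + 1 => 0
  | _ + 1, 0 => 0
  | K + 1, d + 1 => K.choose d

/-- auxiliary: `C(K-1, d)` with correct boundary behaviour -/
def ggK : ℕ → ℕ → ℕ
  | 0, _ => 0
  | K + 1, d => K.choose d

lemma ffK_add_ggK (K d : ℕ) : ffK K d + ggK K d = K.choose d := by
  match K, d with
  | 0, 0 => rfl
  | 0, d + 1 => simp [ffK, ggK, Nat.choose_eq_zero_of_lt (Nat.succ_pos d)]
  | K + 1, 0 => simp [ffK, ggK]
  | K + 1, d + 1 =>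
    show K.choose d + K.choose (d + 1) = (K + 1).choose (d + 1)
    rw [Nat.choose_succ_succ']

lemma onesCount_le {N : ℕ} (ζ : Fin N → Bool) : onesCount ζ ≤ N := by
  calc onesCount ζ ≤ (Finset.univ : Finset (Fin N)).card := Finset.card_filter_le _ _
  _ = N := by simp

lemma cnt_big (N M d : ℕ) (h : N < M) : cnt N M d = 0 := by
  rw [cnt, Finset.card_eq_zero, Finset.filter_eq_empty_iff]
  rintro ζ - ⟨h1, -⟩
  exact absurd (h1 ▸ onesCount_le ζ) (by omega)

lemma countTF : ∀ N M d : ℕ, M ≤ N + 1 →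
    cntT (N + 1) M d = M.choose d * ffK (N + 1 - M) d ∧
    cntF (N + 1) M d = M.choose d * ggK (N + 1 - M) d := by
  intro N
  induction N with
  | zero =>
    intro M d hM
    constructor
    · rcases M with _ | M
      · rw [cntT_zero_ones]
        rcases d with _ | e
        · simp [ffK]
        · simp [Nat.choose_eq_zero_of_lt (Nat.succ_pos e)]
      · have hM0 : M = 0 := by omega
        subst hM0
        rw [cntT_one, cnt_zero]
        rcases d with _ | e
        · simp [ffK]
        · simp [ffK]
    · rw [cntF_succ, cnt_zero]
      rcases M with _ | M
      · rcases d with _ | e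
        · simp [ggK]
        · simp [ggK, Nat.choose_eq_zero_of_lt (Nat.succ_pos e)]
      · have hM0 : M = 0 := by omega
        subst hM0
        simp [ggK]
  | succ n ih =>
    intro M d hM
    constructor
    · -- cntT (n+2) M d
      rcases M with _ | M
      · rw [cntT_zero_ones]
        rcases d with _ | e
        · simp [ffK]
        · simp [Nat.choose_eq_zero_of_lt (Nat.succ_pos e)]
      · rw [cntT_succ _ _ _ (Nat.succ_pos n)]
        have hM' : M ≤ n + 1 := by omega
        obtain ⟨hT, hF⟩ := ih M d hM'
        rcases d with _ | e
        · rw [hT]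
          have : n + 2 - (M + 1) = n + 1 - M := by omega
          rw [this]
          rcases h : n + 1 - M with _ | K
          · simp [ffK]
          · simp [ffK]
        · obtain ⟨hT, hF⟩ := ih M (e + 1) hM'
          obtain ⟨-, hFe⟩ := ih M e hM'
          show cntF (n + 1) M e + cntT (n + 1) M (e + 1) = _
          rw [hFe, hT]
          have h2 : n + 2 - (M + 1) = n + 1 - M := by omega
          rw [h2]
          rcases h : n + 1 - M with _ | K
          · simp [ffK, ggK]
          · show M.choose e * K.choose e + M.choose (e + 1) * K.choose e
              = (M + 1).choose (e + 1) * ffK (K + 1) (e + 1)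
            show _ = (M + 1).choose (e + 1) * K.choose e
            rw [← add_mul, Nat.choose_succ_succ]
    · -- cntF (n+2) M d
        rw [cntF_succ]
        rcases Nat.lt_or_ge (n + 1) M with h | h
        · rw [cnt_big _ _ _ h]
          have : n + 2 - M = 0 := by omega
          rw [this]
          simp [ggK]
        · rw [cnt_split]
          obtain ⟨hT, hF⟩ := ih M d h
          rw [hT, hF, ← Nat.mul_add, add_comm (ggK _ _) (ffK _ _), ffK_add_ggK]
          have : n + 2 - M = (n + 1 - M) + 1 := by omega
          rw [this]
          rfl

lemma cnt_closed (N M d : ℕ) (hM : M ≤ N) :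
    cnt N M d = M.choose d * (N - M).choose d := by
  rcases N with _ | n
  · interval_cases M
    rw [cnt_zero]
    rcases d with _ | e
    · simp
    · simp [Nat.choose_eq_zero_of_lt (Nat.succ_pos e)]
  · rw [cnt_split]
    obtain ⟨hT, hF⟩ := countTF n M d hM
    rw [hT, hF, ← Nat.mul_add, add_comm (ggK _ _) (ffK _ _), ffK_add_ggK]

lemma asc_succ_left_eval (n : ℕ) (x : ℝ) :
    (ascPochhammer ℝ (n + 1)).eval x = x * (ascPochhammer ℝ n).eval (x + 1) := by
  rw [ascPochhammer_succ_left]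
  simp [Polynomial.eval_comp]

lemma alg : ∀ K M : ℕ, ∀ γ : ℝ,
    ∑ d ∈ Finset.range (M + 1),
      ((M.choose d * K.choose d * d.factorial : ℕ) : ℝ) *
        (ascPochhammer ℝ (M - d)).eval (γ + d + 1)
      = (ascPochhammer ℝ M).eval (γ + K + 1) := by
  intro K
  induction K with
  | zero =>
    intro M γ
    rw [Finset.sum_eq_single 0]
    · simp
    · intro d _ hd
      rcases d with _ | e
      · exact absurd rfl hd
      · simp
    · simp
  | succ K ih =>
    intro M γ
    rcases M with _ | m
    · simp
    · have hsplit :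
          ∑ d ∈ Finset.range (m + 1 + 1),
            (((m+1).choose d * (K+1).choose d * d.factorial : ℕ) : ℝ) *
              (ascPochhammer ℝ (m + 1 - d)).eval (γ + d + 1)
          = (∑ d ∈ Finset.range (m + 1 + 1),
              (((m+1).choose d * K.choose d * d.factorial : ℕ) : ℝ) *
                (ascPochhammer ℝ (m + 1 - d)).eval (γ + d + 1))
            + ∑ d ∈ Finset.range (m + 1 + 1),
              (match d with
                | 0 => (0 : ℝ)
                | e + 1 => (((m+1).choose (e+1) * K.choose e * (e+1).factorial : ℕ) : ℝ) *
                    (ascPochhammer ℝ (m + 1 - (e+1))).eval (γ + ((e+1 : ℕ) : ℝ) + 1)) := by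
        rw [← Finset.sum_add_distrib]
        apply Finset.sum_congr rfl
        intro d _
        rcases d with _ | e
        · simp
        · show _ = _ + (((m+1).choose (e+1) * K.choose e * (e+1).factorial : ℕ) : ℝ) * _
          rw [Nat.choose_succ_succ K e]
          push_cast
          ring
      rw [hsplit, ih (m + 1) γ]
      rw [Finset.sum_range_succ']
      have hshift : ∑ e ∈ Finset.range (m + 1),
          (match e + 1 with
            | 0 => (0 : ℝ)
            | e + 1 => (((m+1).choose (e+1) * K.choose e * (e+1).factorial : ℕ) : ℝ) *
                (ascPochhammer ℝ (m + 1 - (e+1))).eval (γ + ((e+1 : ℕ) : ℝ) + 1))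
          = ((m + 1 : ℕ) : ℝ) * ∑ e ∈ Finset.range (m + 1),
              ((m.choose e * K.choose e * e.factorial : ℕ) : ℝ) *
                (ascPochhammer ℝ (m - e)).eval ((γ + 1) + e + 1) := by
        rw [Finset.mul_sum]
        apply Finset.sum_congr rfl
        intro e _
        show (((m+1).choose (e+1) * K.choose e * (e+1).factorial : ℕ) : ℝ) *
            (ascPochhammer ℝ (m + 1 - (e+1))).eval (γ + ((e+1 : ℕ) : ℝ) + 1) = _
        have h1 : m + 1 - (e + 1) = m - e := by omega
        have h2 : (γ + ((e + 1 : ℕ) : ℝ) + 1 : ℝ) = (γ + 1) + (e : ℕ) + 1 := by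
          push_cast; ring
        rw [h1, h2]
        have h3 : ((m+1).choose (e+1) * (e+1).factorial : ℕ)
            = (m+1) * (m.choose e * e.factorial) := by
          rw [Nat.factorial_succ, ← Nat.mul_assoc, ← Nat.mul_assoc, Nat.add_one_mul_choose_eq]
        have h4 : ((m+1).choose (e+1) * K.choose e * (e+1).factorial : ℕ)
            = (m+1) * (m.choose e * K.choose e * e.factorial) := by
          rw [Nat.mul_right_comm, h3]; ring
        rw [h4]
        push_cast
        ring
      rw [hshift, ih m (γ + 1)]
      -- now pure Pochhammer algebra
      have hA : (γ + 1 + (K : ℝ) + 1 : ℝ) = γ + (K : ℝ) + 2 := by ring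
      have hL : (ascPochhammer ℝ (m + 1)).eval (γ + (K : ℝ) + 1)
          = (γ + (K : ℝ) + 1) * (ascPochhammer ℝ m).eval (γ + (K : ℝ) + 2) := by
        rw [asc_succ_left_eval]
        ring_nf
      have hB : (γ + (((K : ℕ) + 1 : ℕ) : ℝ) + 1) = γ + (K : ℝ) + 2 := by
        push_cast; ring
      rw [hA, hB, hL, ascPochhammer_succ_eval]
      push_cast
      ring

lemma descCount_le_onesCount {N : ℕ} (hN : 1 ≤ N) (ζ : Fin N → Bool) :
    descCount ζ ≤ onesCount ζ := by
  rw [descCount, onesCount]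
  apply Finset.card_le_card_of_injOn (fun i => (⟨min i (N - 1), by omega⟩ : Fin N))
  · intro i hi
    rw [Finset.mem_coe, Finset.mem_filter] at hi ⊢
    obtain ⟨hir, hit, -⟩ := hi
    rw [Finset.mem_range] at hir
    refine ⟨Finset.mem_univ _, ?_⟩
    rw [extSeq, dif_pos (by omega : i < N)] at hit
    have : min i (N - 1) = i := by omega
    simpa [this] using hit
  · intro i hi j hj hij
    simp only [Finset.coe_filter, Set.mem_setOf_eq] at hi hj
    have hi' : i < N - 1 := Finset.mem_range.mp hi.1
    have hj' : j < N - 1 := Finset.mem_range.mp hj.1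
    have := Fin.mk.injEq .. ▸ hij
    simp only [Fin.mk.injEq] at hij
    omega

/-- for integers `N ≥ 1`, `0 ≤ M ≤ N` and real `γ`,
`∑_{ζ ∈ {0,1}^N, Σζ_i = M} des(ζ)! ⬝ (γ + des(ζ) + 1)_{M - des(ζ)} = (γ + 1 + N - M)_M`. -/
theorem descent_sum_identity (N M : ℕ) (hN : 1 ≤ N) (hM : M ≤ N) (γ : ℝ) :
    ∑ ζ ∈ Finset.univ.filter (fun ζ : Fin N → Bool => onesCount ζ = M),
      ((descCount ζ).factorial : ℝ) *
        (ascPochhammer ℝ (M - descCount ζ)).eval (γ + (descCount ζ : ℝ) + 1) =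
      (ascPochhammer ℝ M).eval (γ + 1 + (N : ℝ) - (M : ℝ)) := by
  classical
  have hmaps : ∀ ζ ∈ Finset.univ.filter (fun ζ : Fin N → Bool => onesCount ζ = M),
      descCount ζ ∈ Finset.range (M + 1) := by
    intro ζ hζ
    rw [Finset.mem_filter] at hζ
    rw [Finset.mem_range]
    have := descCount_le_onesCount hN ζ
    omega
  rw [← Finset.sum_fiberwise_of_maps_to hmaps]
  have hfib : ∀ d ∈ Finset.range (M + 1),
      ∑ ζ ∈ (Finset.univ.filter (fun ζ : Fin N → Bool => onesCount ζ = M)).filter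
          (fun ζ => descCount ζ = d),
        ((descCount ζ).factorial : ℝ) *
          (ascPochhammer ℝ (M - descCount ζ)).eval (γ + (descCount ζ : ℝ) + 1)
      = ((M.choose d * (N - M).choose d * d.factorial : ℕ) : ℝ) *
          (ascPochhammer ℝ (M - d)).eval (γ + (d : ℝ) + 1) := by
    intro d _
    trans ∑ _ζ ∈ (Finset.univ.filter (fun ζ : Fin N → Bool => onesCount ζ = M)).filter
        (fun ζ => descCount ζ = d),
      ((d.factorial : ℝ) * (ascPochhammer ℝ (M - d)).eval (γ + (d : ℝ) + 1))
    · apply Finset.sum_congr rfl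
      intro ζ hζ
      rw [(Finset.mem_filter.mp hζ).2]
    rw [Finset.sum_const, nsmul_eq_mul]
    rw [Finset.filter_filter]
    have : (Finset.univ.filter
        (fun ζ : Fin N → Bool => onesCount ζ = M ∧ descCount ζ = d)).card
        = cnt N M d := rfl
    rw [this, cnt_closed N M d hM]
    push_cast
    ring
  rw [Finset.sum_congr rfl hfib, alg (N - M) M γ]
  congr 1
  have : ((N - M : ℕ) : ℝ) = (N : ℝ) - M := by
    push_cast [Nat.cast_sub hM]; ring
  rw [this]
  ring
end

section
/- With the moment-cumulant map m_k = [z⁰](∂ + γd + *_g)^{k-1}(g(z)), g(z) = Σ_{l≥1} κ_l z^{l-1}, one has m_4 = (γ+1)(γ+2)(γ+3)κ_4 + 4(γ+1)(γ+2)κ_3κ_1 + (γ+1)(2γ+3)κ_2² + 6(γ+1)κ_2κ_1² + κ_1⁴. -/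
/-- The derivation operator `∂` on formal power series. -/
noncomputable def derOp (h : PowerSeries ℝ) : PowerSeries ℝ :=
  PowerSeries.mk fun n => ((n : ℝ) + 1) * PowerSeries.coeff (n + 1) h

/-- The lowering operator `d` on formal power series:
`d(Σ h_n zⁿ) = Σ h_{n+1} zⁿ`. -/
noncomputable def lowOp (h : PowerSeries ℝ) : PowerSeries ℝ :=
  PowerSeries.mk fun n => PowerSeries.coeff (n + 1) h

/-- The generating series `g(z) = Σ_{l ≥ 1} κ_l z^{l-1}`. -/
noncomputable def cumulGF (κ : ℕ → ℝ) : PowerSeries ℝ :=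
  PowerSeries.mk fun n => κ (n + 1)

/-- The operator `∂ + γd + *_g` on formal power series. -/
noncomputable def momentOp (γ : ℝ) (κ : ℕ → ℝ) (h : PowerSeries ℝ) : PowerSeries ℝ :=
  derOp h + γ • lowOp h + cumulGF κ * h

/-!
`[z⁰]` of the third iterate only involves the coefficients of index at most `3 - k` of the
`k`-th iterate, and each application of `∂ + γd + *_g` is an explicit finite recursion on
coefficients, so unfolding it three times leaves a polynomial identity in `γ, κ₁, …, κ₄`.
-/

open PowerSeries Finset

theorem coeff_cumulGF (κ : ℕ → ℝ) (n : ℕ) : coeff n (cumulGF κ) = κ (n + 1) :=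
  coeff_mk _ _

theorem coeff_momentOp (γ : ℝ) (κ : ℕ → ℝ) (h : PowerSeries ℝ) (n : ℕ) :
    coeff n (momentOp γ κ h) =
      (n + 1 + γ) * coeff (n + 1) h + ∑ i ∈ range (n + 1), κ (i + 1) * coeff (n - i) h := by
  rw [momentOp, map_add, map_add, coeff_mul,
    Nat.sum_antidiagonal_eq_sum_range_succ fun i j => coeff i (cumulGF κ) * coeff j h]
  simp only [derOp, lowOp, coeff_mk, coeff_smul, coeff_cumulGF, smul_eq_mul]
  ring

/-- with `m_k = [z⁰](∂ + γd + *_g)^{k-1}(g)`, one has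
`m_4 = (γ+1)(γ+2)(γ+3)κ_4 + 4(γ+1)(γ+2)κ_3κ_1 + (γ+1)(2γ+3)κ_2² + 6(γ+1)κ_2κ_1² + κ_1⁴`. -/
theorem fourth_moment (γ : ℝ) (κ : ℕ → ℝ) :
    PowerSeries.constantCoeff ((momentOp γ κ)^[3] (cumulGF κ)) =
      (γ + 1) * (γ + 2) * (γ + 3) * κ 4 + 4 * (γ + 1) * (γ + 2) * κ 3 * κ 1 +
        (γ + 1) * (2 * γ + 3) * κ 2 ^ 2 + 6 * (γ + 1) * κ 2 * κ 1 ^ 2 + κ 1 ^ 4 := by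
  rw [← coeff_zero_eq_constantCoeff_apply]
  simp only [Function.iterate_succ_apply', Function.iterate_zero_apply, coeff_momentOp,
    coeff_cumulGF, sum_range_succ, sum_range_zero]
  norm_num
  ring
end

section
/- Suppose {m_k}_{k≥1} is obtained from {κ_l}_{l≥1} via m_k = Σ_{π ∈ P(k)} W(π) Π_{B∈π} κ_{|B|} with γ-weights W(π), and {c_l} are the classical cumulants of {m_k} defined by Σ_{l≥1} c_l y^l / l! = log(1 + Σ_{k≥1} m_k y^k / k!). If κ_l^0 = lim_{γ→0} κ_l (where {κ_l} = (T^γ)^{-1}({m_k}) for the same fixed moment sequence), then κ_l^0 = c_l / (l-1)! for every l ≥ 1. -/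
/-!
As `γ → 0` each weight `W(π)` tends to `∏_{B ∈ π} p! (p + 1)_q = ∏_{B ∈ π} (|B| - 1)!`, so the
moments become `m_k = B_k((l - 1)! κ⁰_l)`, where `B_k` is the complete Bell polynomial
`∑_{π ∈ P(k)} ∏_{B ∈ π} a_{|B|}`. By the exponential formula the classical cumulants satisfy
`m_k = B_k(c_l)` as well, and `B_k(a) = a_k + (terms in a_1, …, a_{k-1})` determines `a` from
`B(a)`. The exponential formula itself compares the recursion
`B_{n+1} = ∑_i (n choose i) a_{n-i+1} B_i`, obtained by removing the block of one point, with
the differential equation `E' = E f'` satisfied by `E = exp f`.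
-/

/-- A set partition of `{1, …, k}` (modeled as `Fin k`): a collection of nonempty,
pairwise disjoint blocks whose union is everything. -/
def IsSetPartition (k : ℕ) (π : Finset (Finset (Fin k))) : Prop :=
  (∀ B ∈ π, B.Nonempty) ∧ (∀ B ∈ π, ∀ C ∈ π, B ≠ C → Disjoint B C) ∧
    π.sup id = Finset.univ

instance (k : ℕ) : DecidablePred (IsSetPartition k) := fun π => by
  unfold IsSetPartition; infer_instance

/-- The finite set of all set partitions of `{1, …, k}`. -/
def setPartitions (k : ℕ) : Finset (Finset (Finset (Fin k))) :=
  Finset.univ.filter (IsSetPartition k)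

/-- `pval π B` is the statistic `p` of the block `B` in the set partition `π`:
the number of "roofs" of `B`, i.e. pairs of consecutive elements
`u < v` of `B`, such that some element strictly between `u` and `v` belongs to an
earlier block (a block whose minimum is smaller than the minimum of `B`). -/
def pval {k : ℕ} (π : Finset (Finset (Fin k))) (B : Finset (Fin k)) : ℕ :=
  (Finset.univ.filter (fun uv : Fin k × Fin k =>
    uv.1 ∈ B ∧ uv.2 ∈ B ∧ uv.1 < uv.2 ∧ (∀ w ∈ B, ¬(uv.1 < w ∧ w < uv.2)) ∧
      ∃ x : Fin k, uv.1 < x ∧ x < uv.2 ∧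
        ∃ B' ∈ π, x ∈ B' ∧ B'.min < B.min)).card

/-- The complementary statistic `q = |B| - 1 - p`. -/
def qval {k : ℕ} (π : Finset (Finset (Fin k))) (B : Finset (Fin k)) : ℕ :=
  B.card - 1 - pval π B

/-- The γ-weight `W(π) = ∏_i p(i)! ⬝ (γ + p(i) + 1)_{q(i)}` of a set partition. -/
noncomputable def Wweight {k : ℕ} (γ : ℝ) (π : Finset (Finset (Fin k))) : ℝ :=
  ∏ B ∈ π, ((pval π B).factorial : ℝ) *
    (ascPochhammer ℝ (qval π B)).eval (γ + (pval π B : ℝ) + 1)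

/-- Exponential of a formal power series with zero constant term:
`exp f = Σ_j f^j / j!`, defined coefficient-wise. -/
noncomputable def expPS (f : PowerSeries ℝ) : PowerSeries ℝ :=
  PowerSeries.mk fun n =>
    ∑ j ∈ Finset.range (n + 1), PowerSeries.coeff n (f ^ j) / (j.factorial : ℝ)

open Finset PowerSeries

section CompleteBell

variable {R : Type*}

def completeBell [CommSemiring R] (a : ℕ → R) : ℕ → R
  | 0 => 1
  | n + 1 => ∑ i : Fin (n + 1), (n.choose i : R) * a (n - i + 1) * completeBell a i

theorem completeBell_zero [CommSemiring R] (a : ℕ → R) : completeBell a 0 = 1 := by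
  rw [completeBell]

theorem completeBell_succ [CommSemiring R] (a : ℕ → R) (n : ℕ) :
    completeBell a (n + 1) =
      ∑ i : Fin (n + 1), (n.choose i : R) * a (n - i + 1) * completeBell a i := by
  rw [completeBell]

theorem completeBell_succ_eq_add [CommSemiring R] (a : ℕ → R) (n : ℕ) :
    completeBell a (n + 1) =
      a (n + 1) + ∑ i : Fin n, (n.choose (i + 1) : R) * a (n - i) * completeBell a (i + 1) := by
  rw [completeBell_succ, Fin.sum_univ_succ]
  congr 1
  · simp [completeBell_zero]
  · refine sum_congr rfl fun i _ => ?_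
    rw [Fin.val_succ, show n - (i + 1) + 1 = n - i by omega]

theorem completeBell_congr [CommSemiring R] {a b : ℕ → R} {n : ℕ}
    (h : ∀ j, 1 ≤ j → j ≤ n → a j = b j) : completeBell a n = completeBell b n := by
  induction n using Nat.strong_induction_on with
  | _ n ih =>
    rcases n with _ | n
    · rw [completeBell_zero, completeBell_zero]
    rw [completeBell_succ, completeBell_succ]
    refine sum_congr rfl fun i _ => ?_
    rw [h _ le_add_self (by omega), ih i i.2 fun j hj hji => h j hj (by omega)]

theorem eq_of_completeBell_eq [CommRing R] {a b : ℕ → R}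
    (h : ∀ n, 1 ≤ n → completeBell a n = completeBell b n) : ∀ l, 1 ≤ l → a l = b l := by
  intro l
  induction l using Nat.strong_induction_on with
  | _ l ih =>
    intro hl
    obtain ⟨n, rfl⟩ : ∃ n, l = n + 1 := ⟨l - 1, by omega⟩
    have hlower : ∀ j, 1 ≤ j → j ≤ n → a j = b j := fun j hj hjn => ih j (by omega) hj
    have htail : ∑ i : Fin n, (n.choose (i + 1) : R) * a (n - i) * completeBell a (i + 1) =
        ∑ i : Fin n, (n.choose (i + 1) : R) * b (n - i) * completeBell b (i + 1) := by
      refine sum_congr rfl fun i _ => ?_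
      rw [hlower _ (by omega) (by omega),
        completeBell_congr fun j hj hji => hlower j hj (by omega)]
    have hn := h (n + 1) le_add_self
    rw [completeBell_succ_eq_add, completeBell_succ_eq_add, htail] at hn
    exact add_right_cancel hn

end CompleteBell

section Partitions

variable {α : Type*} [DecidableEq α]

def IsPartitionOf (S : Finset α) (π : Finset (Finset α)) : Prop :=
  (∀ B ∈ π, B.Nonempty) ∧ (∀ B ∈ π, ∀ C ∈ π, B ≠ C → Disjoint B C) ∧ π.sup id = S

instance (S : Finset α) : DecidablePred (IsPartitionOf S) := fun π => by
  unfold IsPartitionOf; infer_instance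

def partitionsOf (S : Finset α) : Finset (Finset (Finset α)) :=
  S.powerset.powerset.filter (IsPartitionOf S)

theorem IsPartitionOf.subset {S : Finset α} {π : Finset (Finset α)} (hπ : IsPartitionOf S π)
    {B : Finset α} (hB : B ∈ π) : B ⊆ S :=
  hπ.2.2 ▸ le_sup (f := id) hB

theorem mem_partitionsOf {S : Finset α} {π : Finset (Finset α)} :
    π ∈ partitionsOf S ↔ IsPartitionOf S π :=
  ⟨fun h => (mem_filter.1 h).2, fun h => mem_filter.2
    ⟨mem_powerset.2 fun _ hB => mem_powerset.2 (h.subset hB), h⟩⟩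

theorem setPartitions_eq_partitionsOf_univ (k : ℕ) :
    setPartitions k = partitionsOf (univ : Finset (Fin k)) := by
  ext π
  rw [mem_partitionsOf, setPartitions, mem_filter]
  exact and_iff_right (mem_univ π)

theorem IsPartitionOf.mem_iff_eq {S : Finset α} {π : Finset (Finset α)} (hπ : IsPartitionOf S π)
    {B C : Finset α} (hB : B ∈ π) (hC : C ∈ π) {x : α} (hxB : x ∈ B) : x ∈ C ↔ C = B := by
  refine ⟨fun hxC => ?_, fun h => h ▸ hxB⟩
  by_contra hne
  exact disjoint_left.1 (hπ.2.1 C hC B hB hne) hxC hxB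

theorem partitionsOf_empty : partitionsOf (∅ : Finset α) = {∅} := by
  ext π
  rw [mem_partitionsOf, mem_singleton]
  refine ⟨fun hπ => eq_empty_of_forall_notMem fun B hB => ?_, ?_⟩
  · obtain ⟨x, hx⟩ := hπ.1 B hB
    exact notMem_empty x (hπ.subset hB hx)
  · rintro rfl
    exact ⟨by simp, by simp, rfl⟩

theorem IsPartitionOf.insert {A B : Finset α} {σ : Finset (Finset α)} (hσ : IsPartitionOf A σ)
    (hB : B.Nonempty) (hBA : Disjoint B A) : IsPartitionOf (B ∪ A) (insert B σ) := by
  refine ⟨?_, ?_, by rw [sup_insert, hσ.2.2]; rfl⟩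
  · simpa [forall_mem_insert] using ⟨hB, hσ.1⟩
  · have hdisj : ∀ C ∈ σ, Disjoint B C := fun C hC => hBA.mono_right (hσ.subset hC)
    intro C hC D hD hne
    rcases mem_insert.1 hC with hCB | hC <;> rcases mem_insert.1 hD with hDB | hD
    · exact absurd (hCB.trans hDB.symm) hne
    · exact hCB ▸ hdisj D hD
    · exact hDB ▸ (hdisj C hC).symm
    · exact hσ.2.1 C hC D hD hne

theorem IsPartitionOf.erase {S B : Finset α} {π : Finset (Finset α)} (hπ : IsPartitionOf S π)
    (hB : B ∈ π) : IsPartitionOf (S \ B) (π.erase B) := by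
  refine ⟨fun C hC => hπ.1 C (mem_of_mem_erase hC),
    fun C hC D hD => hπ.2.1 C (mem_of_mem_erase hC) D (mem_of_mem_erase hD), ?_⟩
  have hdisj : Disjoint B ((π.erase B).sup id) := Finset.disjoint_sup_right.2 fun C hC =>
    hπ.2.1 B hB C (mem_of_mem_erase hC) (ne_of_mem_erase hC).symm
  rw [← hπ.2.2, ← insert_erase hB, sup_insert, erase_insert (notMem_erase B π)]
  exact (union_sdiff_cancel_left hdisj).symm

theorem IsPartitionOf.filter_mem_eq {S B : Finset α} {π : Finset (Finset α)}
    (hπ : IsPartitionOf S π) (hB : B ∈ π) {x : α} (hxB : x ∈ B) :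
    π.filter (x ∈ ·) = {B} := by
  ext C
  rw [mem_filter, mem_singleton]
  exact ⟨fun ⟨hC, hxC⟩ => (hπ.mem_iff_eq hB hC hxB).1 hxC, fun h => h ▸ ⟨hB, hxB⟩⟩

theorem IsPartitionOf.filter_notMem_eq {S B : Finset α} {π : Finset (Finset α)}
    (hπ : IsPartitionOf S π) (hB : B ∈ π) {x : α} (hxB : x ∈ B) :
    π.filter (x ∉ ·) = π.erase B := by
  ext C
  rw [mem_filter, mem_erase]
  exact ⟨fun ⟨hC, hxC⟩ => ⟨fun h => hxC (h ▸ hxB), hC⟩,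
    fun ⟨hne, hC⟩ => ⟨hC, fun hxC => hne ((hπ.mem_iff_eq hB hC hxB).1 hxC)⟩⟩

theorem insert_sdiff_notMem {x : α} {A S : Finset α} {σ : Finset (Finset α)}
    (hx : x ∉ S) (hA : A ⊆ S) (hσ : IsPartitionOf A σ) : insert x (S \ A) ∉ σ :=
  fun h => hx (hA (hσ.subset h (mem_insert_self x _)))

theorem isPartitionOf_insert_insert_sdiff {x : α} {A S : Finset α} {σ : Finset (Finset α)}
    (hx : x ∉ S) (hA : A ⊆ S) (hσ : IsPartitionOf A σ) :
    IsPartitionOf (insert x S) (insert (insert x (S \ A)) σ) := by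
  have hdisj : Disjoint (insert x (S \ A)) A :=
    disjoint_insert_left.2 ⟨fun h => hx (hA h), sdiff_disjoint⟩
  have h := hσ.insert (insert_nonempty x _) hdisj
  rwa [insert_union, sdiff_union_of_subset hA] at h

/-- Splitting off the block containing a new point `x`; `A` is the part of `S` outside that
block. -/
theorem sum_partitionsOf_insert {M : Type*} [AddCommMonoid M] (f : Finset (Finset α) → M)
    {x : α} {S : Finset α} (hx : x ∉ S) :
    ∑ π ∈ partitionsOf (insert x S), f π =
      ∑ A ∈ S.powerset, ∑ σ ∈ partitionsOf A, f (insert (insert x (S \ A)) σ) := by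
  have hblock : ∀ π ∈ partitionsOf (insert x S), ∃ B ∈ π, x ∈ B := fun π hπ =>
    mem_sup.1 ((mem_partitionsOf.1 hπ).2.2 ▸ mem_insert_self x S)
  rw [sum_sigma']
  refine (sum_nbij'
    (fun p : (_ : Finset α) × Finset (Finset α) => insert (insert x (S \ p.1)) p.2)
    (fun π => ⟨S \ (π.filter (x ∈ ·)).sup id, π.filter (x ∉ ·)⟩) ?_ ?_ ?_ ?_ fun _ _ => rfl).symm
  · rintro ⟨A, σ⟩ hp
    obtain ⟨hA, hσ⟩ := mem_sigma.1 hp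
    exact mem_partitionsOf.2 (isPartitionOf_insert_insert_sdiff hx (mem_powerset.1 hA)
      (mem_partitionsOf.1 hσ))
  · intro π hπ
    obtain ⟨B, hB, hxB⟩ := hblock π hπ
    have hπ' := mem_partitionsOf.1 hπ
    rw [hπ'.filter_mem_eq hB hxB, hπ'.filter_notMem_eq hB hxB, sup_singleton, id]
    refine mem_sigma.2 ⟨mem_powerset.2 sdiff_subset, mem_partitionsOf.2 ?_⟩
    simpa [insert_sdiff_of_mem S hxB] using hπ'.erase hB
  · rintro ⟨A, σ⟩ hp
    obtain ⟨hA, hσ⟩ := mem_sigma.1 hp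
    replace hA := mem_powerset.1 hA
    have hπ := isPartitionOf_insert_insert_sdiff hx hA (mem_partitionsOf.1 hσ)
    dsimp only
    rw [hπ.filter_mem_eq (mem_insert_self _ σ) (mem_insert_self x _),
      hπ.filter_notMem_eq (mem_insert_self _ σ) (mem_insert_self x _), sup_singleton, id,
      erase_insert (insert_sdiff_notMem hx hA (mem_partitionsOf.1 hσ)),
      sdiff_insert_of_notMem hx, Finset.sdiff_sdiff_eq_self hA]
  · intro π hπ
    obtain ⟨B, hB, hxB⟩ := hblock π hπ
    have hπ' := mem_partitionsOf.1 hπ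
    have hBx : insert x (S \ (S \ B)) = B := by
      rw [sdiff_sdiff_right_self, inf_eq_inter, ← insert_inter_of_mem hxB,
        inter_eq_right.2 (hπ'.subset hB)]
    dsimp only
    rw [hπ'.filter_mem_eq hB hxB, hπ'.filter_notMem_eq hB hxB, sup_singleton, id, hBx,
      insert_erase hB]

theorem sum_partitionsOf_prod_eq_completeBell {R : Type*} [CommSemiring R] (a : ℕ → R)
    (S : Finset α) : ∑ π ∈ partitionsOf S, ∏ B ∈ π, a #B = completeBell a #S := by
  induction S using Finset.strongInduction with
  | H S ih =>
    rcases S.eq_empty_or_nonempty with rfl | ⟨x, hx⟩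
    · simp [partitionsOf_empty, completeBell_zero]
    set T := S.erase x
    have hxT : x ∉ T := notMem_erase x S
    have hST : S = insert x T := (insert_erase hx).symm
    have hterm : ∀ A ∈ T.powerset, ∑ σ ∈ partitionsOf A, ∏ B ∈ insert (insert x (T \ A)) σ, a #B
        = a (#T - #A + 1) * completeBell a #A := by
      intro A hA
      replace hA := mem_powerset.1 hA
      rw [sum_congr rfl fun σ hσ =>
          prod_insert (insert_sdiff_notMem hxT hA (mem_partitionsOf.1 hσ)), ← mul_sum,
        ih A (hA.trans_ssubset (erase_ssubset hx)),
        card_insert_of_notMem fun h => hxT (sdiff_subset h), card_sdiff_of_subset hA]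
    rw [hST, sum_partitionsOf_insert _ hxT, sum_congr rfl hterm,
      sum_powerset_apply_card (fun m => a (#T - m + 1) * completeBell a m),
      card_insert_of_notMem hxT, completeBell_succ, sum_range]
    simp only [nsmul_eq_mul, mul_assoc]

theorem sum_setPartitions_prod_eq_completeBell {R : Type*} [CommSemiring R] (a : ℕ → R)
    (k : ℕ) : ∑ π ∈ setPartitions k, ∏ B ∈ π, a #B = completeBell a k := by
  rw [setPartitions_eq_partitionsOf_univ, sum_partitionsOf_prod_eq_completeBell, card_univ,
    Fintype.card_fin]

end Partitions

section ExponentialFormula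

theorem coeff_pow_eq_zero_of_lt {R : Type*} [CommSemiring R] {f : R⟦X⟧}
    (hf : constantCoeff f = 0) {n j : ℕ} (h : n < j) : coeff n (f ^ j) = 0 := by
  obtain ⟨g, rfl⟩ := X_dvd_iff.2 hf
  rw [mul_pow, coeff_X_pow_mul', if_neg (not_le.2 h)]

theorem expPS_eq_subst_exp {f : ℝ⟦X⟧} (hf : constantCoeff f = 0) :
    expPS f = (exp ℝ).subst f := by
  ext n
  rw [expPS, coeff_mk, coeff_subst' (HasSubst.of_constantCoeff_zero' hf),
    finsum_eq_sum_of_support_subset (s := range (n + 1))]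
  · refine sum_congr rfl fun j _ => ?_
    simp [div_eq_inv_mul]
  · intro j hj
    rw [Function.mem_support] at hj
    rw [coe_range, Set.mem_Iio, Nat.lt_succ_iff]
    by_contra h
    exact hj (by rw [coeff_pow_eq_zero_of_lt hf (not_le.1 h), smul_zero])

theorem derivative_expPS {f : ℝ⟦X⟧} (hf : constantCoeff f = 0) :
    d⁄dX ℝ (expPS f) = expPS f * d⁄dX ℝ f := by
  rw [expPS_eq_subst_exp hf, derivative_subst (HasSubst.of_constantCoeff_zero' hf),
    derivative_exp]

open scoped Nat in
theorem coeff_expPS_eq_completeBell (a : ℕ → ℝ) (n : ℕ) :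
    coeff n (expPS (mk fun l => if l = 0 then 0 else a l / (l ! : ℝ))) =
      completeBell a n / n ! := by
  set f : ℝ⟦X⟧ := mk fun l => if l = 0 then 0 else a l / (l ! : ℝ)
  have hf : constantCoeff f = 0 := by simp [f, ← coeff_zero_eq_constantCoeff_apply]
  induction n using Nat.strong_induction_on with
  | _ n ih =>
    rcases n with _ | n
    · simp [expPS, completeBell_zero]
    have hterm : ∀ i : Fin (n + 1), coeff i (expPS f) * coeff (n - i) (d⁄dX ℝ f) =
        n.choose i * a (n - i + 1) * completeBell a i / n ! := by
      intro i
      rw [ih i i.2, coeff_derivative, coeff_mk, if_neg (Nat.succ_ne_zero _),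
        Nat.cast_choose ℝ i.is_le, Nat.factorial_succ (n - i)]
      push_cast
      field_simp
    have hrec := congrArg (coeff n) (derivative_expPS hf)
    rw [coeff_derivative, coeff_mul, Nat.sum_antidiagonal_eq_sum_range_succ_mk, sum_range,
      sum_congr rfl fun i _ => hterm i, ← sum_div, ← completeBell_succ] at hrec
    rw [Nat.factorial_succ, Nat.cast_mul, eq_div_iff (by positivity)]
    rw [eq_div_iff (by positivity)] at hrec
    push_cast at hrec ⊢
    linear_combination hrec

end ExponentialFormula

section GammaLimit

open Filter Topology
open scoped Nat

/-- A roof `(u, v)` of `B` is determined by its left end `u`, which is not the maximum of `B`. -/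
theorem pval_le_card_sub_one {k : ℕ} (π : Finset (Finset (Fin k))) {B : Finset (Fin k)}
    (hB : B.Nonempty) : pval π B ≤ #B - 1 := by
  rw [← card_erase_of_mem (B.max'_mem hB)]
  refine card_le_card_of_injOn Prod.fst (fun uv huv => ?_) fun uv huv uv' huv' hfst => ?_
  · obtain ⟨hu, hv, hlt, -⟩ := (mem_filter.1 huv).2
    exact mem_erase.2 ⟨(hlt.trans_le (B.le_max' _ hv)).ne, hu⟩
  · obtain ⟨-, hv, hlt, hnext, -⟩ := (mem_filter.1 huv).2
    obtain ⟨-, hv', hlt', hnext', -⟩ := (mem_filter.1 huv').2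
    refine Prod.ext hfst (le_antisymm ?_ ?_)
    · exact not_lt.1 fun h => hnext uv'.2 hv' ⟨hfst ▸ hlt', h⟩
    · exact not_lt.1 fun h => hnext' uv.2 hv ⟨hfst ▸ hlt, h⟩

theorem Wweight_zero {k : ℕ} {π : Finset (Finset (Fin k))} (hπ : ∀ B ∈ π, B.Nonempty) :
    Wweight 0 π = ∏ B ∈ π, ((#B - 1)! : ℝ) := by
  refine prod_congr rfl fun B hB => ?_
  have hpq : pval π B + qval π B = #B - 1 := by
    have := pval_le_card_sub_one π (hπ B hB)
    rw [qval]
    omega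
  rw [zero_add, factorial_mul_ascPochhammer, hpq]

theorem continuous_Wweight {k : ℕ} (π : Finset (Finset (Fin k))) :
    Continuous fun γ => Wweight γ π := by
  unfold Wweight
  fun_prop

theorem tendsto_sum_Wweight_mul_prod {κ : ℝ → ℕ → ℝ} {κ0 : ℕ → ℝ}
    (hlim : ∀ l, 1 ≤ l → Tendsto (fun γ => κ γ l) (𝓝[>] 0) (𝓝 (κ0 l))) (k : ℕ) :
    Tendsto (fun γ => ∑ π ∈ setPartitions k, Wweight γ π * ∏ B ∈ π, κ γ #B) (𝓝[>] 0)
      (𝓝 (completeBell (fun j => ((j - 1)! : ℝ) * κ0 j) k)) := by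
  rw [← sum_setPartitions_prod_eq_completeBell]
  refine tendsto_finsetSum _ fun π hπ => ?_
  have hne : ∀ B ∈ π, B.Nonempty := (mem_filter.1 hπ).2.1
  rw [prod_mul_distrib, ← Wweight_zero hne]
  exact (((continuous_Wweight π).tendsto 0).mono_left nhdsWithin_le_nhds).mul
    (tendsto_finsetProd _ fun B hB => hlim _ (card_pos.2 (hne B hB)))

end GammaLimit

/-- suppose `{m_k}` is obtained from the γ-cumulants `{κ_l(γ)}` via
`m_k = Σ_{π ∈ P(k)} W(π) Π_{B ∈ π} κ_{|B|}` (for every `γ > 0`, with the same fixed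
moment sequence), that the classical cumulants `{c_l}` of `{m_k}` satisfy
`Σ_{l ≥ 1} c_l y^l / l! = log (1 + Σ_{k ≥ 1} m_k y^k / k!)` (stated in the equivalent
exponential form), and that `κ_l(γ) → κ_l⁰` as `γ → 0⁺`. Then `κ_l⁰ = c_l / (l-1)!`
for every `l ≥ 1`. -/
theorem gamma_cumulants_tend_to_classical (m c κ0 : ℕ → ℝ) (κ : ℝ → ℕ → ℝ)
    (hmom : ∀ γ : ℝ, 0 < γ → ∀ k : ℕ, 1 ≤ k →
      m k = ∑ π ∈ setPartitions k, Wweight γ π * ∏ B ∈ π, κ γ B.card)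
    (hc : expPS (PowerSeries.mk fun l => if l = 0 then 0 else c l / (l.factorial : ℝ)) =
      PowerSeries.mk fun n => if n = 0 then 1 else m n / (n.factorial : ℝ))
    (hlim : ∀ l : ℕ, 1 ≤ l →
      Filter.Tendsto (fun γ : ℝ => κ γ l) (nhdsWithin 0 (Set.Ioi 0)) (nhds (κ0 l))) :
    ∀ l : ℕ, 1 ≤ l → κ0 l = c l / ((l - 1).factorial : ℝ) := by
  have hm_limit : ∀ k, 1 ≤ k → m k = completeBell (fun j => ((j - 1).factorial : ℝ) * κ0 j) k := by
    intro k hk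
    refine tendsto_const_nhds_iff.1 ((tendsto_sum_Wweight_mul_prod hlim k).congr' ?_)
    filter_upwards [self_mem_nhdsWithin] with γ hγ using (hmom γ hγ k hk).symm
  have hm_classical : ∀ k, 1 ≤ k → m k = completeBell c k := by
    intro k hk
    have hcoeff := congrArg (PowerSeries.coeff k) hc
    rw [coeff_expPS_eq_completeBell, PowerSeries.coeff_mk, if_neg (by omega),
      div_left_inj' (by positivity)] at hcoeff
    exact hcoeff.symm
  intro l hl
  rw [eq_of_completeBell_eq (fun k hk => (hm_classical k hk).symm.trans (hm_limit k hk)) l hl]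
  field_simp
end

section
/- Let {r_l}_{l≥1} be real numbers and γ > 0. Define κ_l := γ^{1-l} r_l and m_k(γ) := Σ_{π ∈ P(k)} W(π) Π_{B∈π} κ_{|B|}. Then lim_{γ→∞} m_k(γ) = Σ_{π ∈ NC(k)} Π_{B∈π} r_{|B|}, the free moment-cumulant formula over non-crossing set partitions. -/
/-- A set partition is non-crossing if no two distinct blocks `B, B'` admit
`x < y < z < w` with `x, z ∈ B` and `y, w ∈ B'`. -/
def IsNonCrossing {k : ℕ} (π : Finset (Finset (Fin k))) : Prop :=
  ∀ B ∈ π, ∀ B' ∈ π, B ≠ B' →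
    ¬∃ x y z w : Fin k, x < y ∧ y < z ∧ z < w ∧ x ∈ B ∧ z ∈ B ∧ y ∈ B' ∧ w ∈ B'

instance {k : ℕ} (π : Finset (Finset (Fin k))) : Decidable (IsNonCrossing π) := by
  unfold IsNonCrossing; infer_instance

open Filter

/-! ### Auxiliary analytic lemmas -/

lemma asc_eval_prod (q : ℕ) (x : ℝ) :
    (ascPochhammer ℝ q).eval x = ∏ j ∈ Finset.range q, (x + j) := by
  induction q with
  | zero => simp
  | succ n ih =>
      rw [ascPochhammer_succ_right, Finset.prod_range_succ, ← ih]
      simp [Polynomial.eval_mul]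

lemma tendsto_poch_zpow (q : ℕ) (c : ℝ) (e : ℤ) (h : (q : ℤ) + e ≤ 0) :
    Tendsto (fun γ : ℝ => (ascPochhammer ℝ q).eval (γ + c) * γ ^ e) atTop
      (nhds (if (q : ℤ) + e = 0 then 1 else 0)) := by
  have hcongr : ∀ γ : ℝ, 0 < γ →
      (∏ j ∈ Finset.range q, (1 + (c + j) / γ)) * γ ^ ((q : ℤ) + e)
        = (ascPochhammer ℝ q).eval (γ + c) * γ ^ e := by
    intro γ hγ
    rw [asc_eval_prod]
    have hγ' : γ ≠ 0 := ne_of_gt hγ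
    have : ∀ j ∈ Finset.range q, γ + c + (j:ℝ) = γ * (1 + (c + j) / γ) := by
      intro j _; field_simp; ring
    rw [Finset.prod_congr rfl this, Finset.prod_mul_distrib, Finset.prod_const,
      zpow_add₀ hγ', zpow_natCast, Finset.card_range]
    ring
  have h1 : Tendsto (fun γ : ℝ => ∏ j ∈ Finset.range q, (1 + (c + j) / γ)) atTop
      (nhds 1) := by
    have := tendsto_finset_prod (f := fun (j : ℕ) (γ : ℝ) => 1 + (c + j) / γ)
      (x := atTop) (a := fun _ => (1:ℝ)) (Finset.range q) (fun j _ => by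
        have : Tendsto (fun γ : ℝ => (c + j) / γ) atTop (nhds 0) :=
          tendsto_id.const_div_atTop (c + j)
        simpa using tendsto_const_nhds.add this)
    simpa using this
  have h2 : Tendsto (fun γ : ℝ => γ ^ ((q : ℤ) + e)) atTop
      (nhds (if (q : ℤ) + e = 0 then 1 else 0)) := by
    rcases eq_or_lt_of_le h with heq | hlt
    · rw [if_pos heq, heq]
      simpa using tendsto_const_nhds (x := (1:ℝ)) (f := atTop (α := ℝ))
    · rw [if_neg (by omega)]
      exact tendsto_zpow_atTop_zero hlt
  have := h1.mul h2
  rw [one_mul] at this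
  refine this.congr' ?_
  filter_upwards [eventually_gt_atTop (0:ℝ)] with γ hγ using hcongr γ hγ

/-! ### Combinatorial lemmas -/

lemma pval_pos {k : ℕ} {π : Finset (Finset (Fin k))} {C D : Finset (Fin k)}
    (hD : D ∈ π) {a b m : Fin k} (ha : a ∈ C) (hb : b ∈ C) (hm : m ∈ D)
    (h1 : a < m) (h2 : m < b) (hmC : m ∉ C) (hmin : D.min < C.min) :
    0 < pval π C := by
  classical
  set S := C.filter (· < m) with hSdef
  set T := C.filter (m < ·) with hTdef
  have hS : S.Nonempty := ⟨a, by simp [hSdef, ha, h1]⟩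
  have hT : T.Nonempty := ⟨b, by simp [hTdef, hb, h2]⟩
  set u := S.max' hS with hu
  set v := T.min' hT with hv
  have huS : u ∈ S := S.max'_mem hS
  have hvT : v ∈ T := T.min'_mem hT
  have huC : u ∈ C := (Finset.mem_filter.mp huS).1
  have hum : u < m := by simpa using (Finset.mem_filter.mp huS).2
  have hvC : v ∈ C := (Finset.mem_filter.mp hvT).1
  have hmv : m < v := by simpa using (Finset.mem_filter.mp hvT).2
  apply Finset.card_pos.mpr
  refine ⟨(u, v), Finset.mem_filter.mpr ⟨Finset.mem_univ _, huC, hvC, hum.trans hmv, ?_,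
    m, hum, hmv, D, hD, hm, hmin⟩⟩
  rintro w hwC ⟨huw, hwv⟩
  rcases lt_trichotomy w m with hwm | rfl | hmw
  · exact absurd (S.le_max' w (Finset.mem_filter.mpr ⟨hwC, by simpa using hwm⟩)) (not_le.mpr huw)
  · exact hmC hwC
  · exact absurd (T.min'_le w (Finset.mem_filter.mpr ⟨hwC, by simpa using hmw⟩)) (not_le.mpr hwv)

lemma nc_iff_pval {k : ℕ} {π : Finset (Finset (Fin k))} (hπ : IsSetPartition k π) :
    IsNonCrossing π ↔ ∀ B ∈ π, pval π B = 0 := by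
  constructor
  · intro hnc B hB
    by_contra hp
    obtain ⟨⟨u, v⟩, huv⟩ := Finset.card_ne_zero.mp hp
    obtain ⟨-, hu, hv, hlt, hcons, x, hx1, hx2, B', hB', hxB', hmin⟩ := Finset.mem_filter.mp huv
    have hBne : B ≠ B' := by
      rintro rfl
      exact hcons x hxB' ⟨hx1, hx2⟩
    have hne' : B'.Nonempty := hπ.1 B' hB'
    set m := B'.min' hne' with hm
    have hmB' : m ∈ B' := B'.min'_mem hne'
    have hmu : m < u := by
      have h1 : (m : WithTop (Fin k)) = B'.min := Finset.coe_min' hne'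
      have h2 : B.min ≤ (u : WithTop (Fin k)) := Finset.min_le hu
      have := lt_of_lt_of_le hmin h2
      rw [← h1] at this
      exact_mod_cast this
    exact hnc B' hB' B hB hBne.symm ⟨m, u, x, v, hmu, hx1, hx2, hmB', hxB', hu, hv⟩
  · rintro hp B hB B' hB' hne ⟨x, y, z, w, hxy, hyz, hzw, hxB, hzB, hyB', hwB'⟩
    have hdisj := hπ.2.1 B hB B' hB' hne
    rcases lt_trichotomy B.min B'.min with hlt | heq | hlt
    · have h0 : 0 < pval π B' :=
        pval_pos hB hyB' hwB' hzB hyz hzw (Finset.disjoint_left.mp hdisj hzB) hlt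
      have := hp B' hB'
      omega
    · have hBn : B.Nonempty := hπ.1 B hB
      have h1 : (↑(B.min' hBn) : WithTop (Fin k)) = B.min := Finset.coe_min' hBn
      have : B.min' hBn ∈ B' := Finset.mem_of_min (by rw [← heq, ← h1])
      exact Finset.disjoint_left.mp hdisj (B.min'_mem hBn) this
    · have h0 : 0 < pval π B :=
        pval_pos hB' hxB hzB hyB' hxy hyz (Finset.disjoint_right.mp hdisj hyB') hlt
      have := hp B hB
      omega

lemma two_le_card_of_pval_pos {k : ℕ} {π : Finset (Finset (Fin k))} {B : Finset (Fin k)}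
    (hp : pval π B ≠ 0) : 2 ≤ B.card := by
  obtain ⟨⟨u, v⟩, huv⟩ := Finset.card_ne_zero.mp hp
  obtain ⟨-, hu, hv, hlt, -⟩ := Finset.mem_filter.mp huv
  exact Finset.one_lt_card.mpr ⟨u, hu, v, hv, ne_of_lt hlt⟩

/-- Per-block limit, generalized. -/
lemma block_aux (p q card : ℕ) (hcard : 1 ≤ card) (hq : q = card - 1 - p)
    (hcard2 : p ≠ 0 → 2 ≤ card) (rv : ℝ) :
    Tendsto (fun γ : ℝ => ((p.factorial : ℝ) *
        (ascPochhammer ℝ q).eval (γ + (p : ℝ) + 1) *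
        (γ ^ ((1 : ℤ) - (card : ℤ)) * rv))) atTop
      (nhds (if p = 0 then rv else 0)) := by
  have hle : (q : ℤ) + ((1 : ℤ) - (card : ℤ)) ≤ 0 := by
    rcases Nat.eq_zero_or_pos p with hp0 | hp1
    · omega
    · have h2 := hcard2 (by omega)
      omega
  have hmain := (tendsto_poch_zpow q ((p : ℝ) + 1) ((1 : ℤ) - (card : ℤ)) hle).const_mul
    ((p.factorial : ℝ) * rv)
  have hEq : (fun γ : ℝ => ((p.factorial : ℝ) * rv) *
      ((ascPochhammer ℝ q).eval (γ + ((p : ℝ) + 1)) * γ ^ ((1 : ℤ) - (card : ℤ))))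
      = (fun γ : ℝ => ((p.factorial : ℝ)) *
        (ascPochhammer ℝ q).eval (γ + (p : ℝ) + 1) * (γ ^ ((1 : ℤ) - (card : ℤ)) * rv)) := by
    funext γ
    rw [add_assoc]
    ring
  rw [hEq] at hmain
  convert hmain using 2
  rcases Nat.eq_zero_or_pos p with hp0 | hp1
  · have hze : (q : ℤ) + ((1 : ℤ) - (card : ℤ)) = 0 := by omega
    rw [if_pos hp0, if_pos hze, hp0]
    simp
  · have h2 := hcard2 (by omega)
    have hze : ¬((q : ℤ) + ((1 : ℤ) - (card : ℤ)) = 0) := by omega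
    rw [if_neg (by omega), if_neg hze]
    ring

/-- Per-block limit. -/
lemma block_tendsto {k : ℕ} (π : Finset (Finset (Fin k))) (B : Finset (Fin k))
    (hBn : B.Nonempty) (r : ℕ → ℝ) :
    Tendsto (fun γ : ℝ => ((pval π B).factorial : ℝ) *
        (ascPochhammer ℝ (qval π B)).eval (γ + (pval π B : ℝ) + 1) *
        (γ ^ ((1 : ℤ) - (B.card : ℤ)) * r B.card)) atTop
      (nhds (if pval π B = 0 then r B.card else 0)) :=
  block_aux (pval π B) (qval π B) B.card (Finset.card_pos.mpr hBn) rfl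
    (fun hp => two_le_card_of_pval_pos hp) (r B.card)

/-- with `κ_l = γ^{1-l} r_l` and
`m_k(γ) = Σ_{π ∈ P(k)} W(π) Π_{B ∈ π} κ_{|B|}`, one has
`lim_{γ→∞} m_k(γ) = Σ_{π ∈ NC(k)} Π_{B ∈ π} r_{|B|}`. -/
theorem moments_tend_to_free (k : ℕ) (hk : 1 ≤ k) (r : ℕ → ℝ) :
    Filter.Tendsto
      (fun γ : ℝ => ∑ π ∈ setPartitions k,
        Wweight γ π * ∏ B ∈ π, γ ^ ((1 : ℤ) - (B.card : ℤ)) * r B.card)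
      Filter.atTop
      (nhds (∑ π ∈ (setPartitions k).filter IsNonCrossing, ∏ B ∈ π, r B.card)) := by
  classical
  rw [Finset.sum_filter]
  apply tendsto_finset_sum
  intro π hπmem
  have hπ : IsSetPartition k π := (Finset.mem_filter.mp hπmem).2
  have hterm : ∀ γ : ℝ, Wweight γ π * ∏ B ∈ π, γ ^ ((1 : ℤ) - (B.card : ℤ)) * r B.card
      = ∏ B ∈ π, (((pval π B).factorial : ℝ) *
          (ascPochhammer ℝ (qval π B)).eval (γ + (pval π B : ℝ) + 1) *
          (γ ^ ((1 : ℤ) - (B.card : ℤ)) * r B.card)) := by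
    intro γ
    rw [Wweight, ← Finset.prod_mul_distrib]
  have hlim : Tendsto (fun γ : ℝ => ∏ B ∈ π,
      (((pval π B).factorial : ℝ) *
        (ascPochhammer ℝ (qval π B)).eval (γ + (pval π B : ℝ) + 1) *
        (γ ^ ((1 : ℤ) - (B.card : ℤ)) * r B.card))) atTop
      (nhds (∏ B ∈ π, if pval π B = 0 then r B.card else 0)) :=
    tendsto_finset_prod _ (fun B hB => block_tendsto π B (hπ.1 B hB) r)
  have hval : (∏ B ∈ π, if pval π B = 0 then r B.card else 0)
      = if IsNonCrossing π then ∏ B ∈ π, r B.card else 0 := by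
    by_cases hnc : IsNonCrossing π
    · rw [if_pos hnc]
      exact Finset.prod_congr rfl (fun B hB => if_pos ((nc_iff_pval hπ).mp hnc B hB))
    · rw [if_neg hnc]
      obtain ⟨B, hB, hpB⟩ := by
        have := (nc_iff_pval hπ).not.mp hnc
        push_neg at this
        exact this
      exact Finset.prod_eq_zero hB (if_neg hpB)
  rw [← hval]
  exact hlim.congr (fun γ => (hterm γ).symm)
end

section
/- Let the γ-cumulant sequence be κ_2 = 1 and κ_l = 0 for l ≠ 2. Then the moments m_k = Σ_{π ∈ P(k)} W(π) Π_{B∈π} κ_{|B|} satisfy: m_k = 0 for k odd, and m_{2m} = Σ_{π ∈ M(2m)} (γ+1)^{roof(π)} for k = 2m even, where M(2m) is the set of perfect matchings of {1,...,2m} and roof(π) counts arcs not crossed by any other arc. -/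
/-- Perfect matchings of `{1, …, k}`: set partitions all of whose blocks have size 2. -/
def perfectMatchings (k : ℕ) : Finset (Finset (Finset (Fin k))) :=
  (setPartitions k).filter (fun π => ∀ B ∈ π, B.card = 2)

/-- `roof(π)`: the number of blocks (arcs) of `π` whose roof is not crossed,
i.e. blocks `B` with `p(B) = 0`. -/
def roofCount {k : ℕ} (π : Finset (Finset (Fin k))) : ℕ :=
  (π.filter (fun B => pval π B = 0)).card

lemma pval_le_one {k : ℕ} (π : Finset (Finset (Fin k))) (B : Finset (Fin k))
    (hB : B.card = 2) : pval π B ≤ 1 := by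
  obtain ⟨a, b, hab, rfl⟩ := Finset.card_eq_two.mp hB
  unfold pval
  rcases lt_or_gt_of_ne hab with h | h
  · refine le_trans (Finset.card_le_card (fun uv huv => ?_)) (le_of_eq (Finset.card_singleton (a, b)))
    simp only [Finset.mem_filter, Finset.mem_univ, Finset.mem_insert, Finset.mem_singleton,
      true_and] at huv ⊢
    obtain ⟨h1, h2, hlt, -⟩ := huv
    have : uv = (uv.1, uv.2) := rfl
    rw [this, Prod.mk.injEq]
    rcases h1 with h1 | h1 <;> rcases h2 with h2 | h2 <;> rw [h1, h2] at hlt ⊢ <;>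
      first
        | exact ⟨rfl, rfl⟩
        | exact absurd hlt (lt_irrefl _)
        | exact absurd hlt (not_lt.mpr h.le)
  · refine le_trans (Finset.card_le_card (fun uv huv => ?_)) (le_of_eq (Finset.card_singleton (b, a)))
    simp only [Finset.mem_filter, Finset.mem_univ, Finset.mem_insert, Finset.mem_singleton,
      true_and] at huv ⊢
    obtain ⟨h1, h2, hlt, -⟩ := huv
    have : uv = (uv.1, uv.2) := rfl
    rw [this, Prod.mk.injEq]
    rcases h1 with h1 | h1 <;> rcases h2 with h2 | h2 <;> rw [h1, h2] at hlt ⊢ <;>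
      first
        | exact ⟨rfl, rfl⟩
        | exact absurd hlt (lt_irrefl _)
        | exact absurd hlt (not_lt.mpr h.le)

lemma Wweight_matching {k : ℕ} (γ : ℝ) (π : Finset (Finset (Fin k)))
    (h2 : ∀ B ∈ π, B.card = 2) : Wweight γ π = (γ + 1) ^ roofCount π := by
  unfold Wweight roofCount
  rw [← Finset.prod_filter_mul_prod_filter_not π (fun B => pval π B = 0)]
  have e1 : ∀ B ∈ π.filter (fun B => pval π B = 0),
      ((pval π B).factorial : ℝ) *
        (ascPochhammer ℝ (qval π B)).eval (γ + (pval π B : ℝ) + 1) = γ + 1 := by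
    intro B hB
    rw [Finset.mem_filter] at hB
    have hq : qval π B = 1 := by unfold qval; rw [h2 B hB.1, hB.2]
    rw [hB.2, hq]
    simp [ascPochhammer_one]
  have e2 : ∀ B ∈ π.filter (fun B => ¬ pval π B = 0),
      ((pval π B).factorial : ℝ) *
        (ascPochhammer ℝ (qval π B)).eval (γ + (pval π B : ℝ) + 1) = 1 := by
    intro B hB
    rw [Finset.mem_filter] at hB
    have hp : pval π B = 1 :=
      le_antisymm (pval_le_one π B (h2 B hB.1)) (Nat.one_le_iff_ne_zero.mpr hB.2)
    have hq : qval π B = 0 := by unfold qval; rw [h2 B hB.1, hp]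
    rw [hp, hq]
    simp
  rw [Finset.prod_congr rfl e1, Finset.prod_congr rfl e2, Finset.prod_const, Finset.prod_const,
    one_pow, mul_one]

lemma card_even_of_matching {k : ℕ} (π : Finset (Finset (Fin k)))
    (hπ : π ∈ perfectMatchings k) : k = 2 * π.card := by
  simp only [perfectMatchings, setPartitions, Finset.mem_filter, Finset.mem_univ, true_and] at hπ
  obtain ⟨⟨-, hdisj, hsup⟩, h2⟩ := hπ
  have hcard := congrArg Finset.card hsup
  rw [Finset.sup_eq_biUnion, Finset.card_biUnion (t := id) hdisj,
    Finset.card_univ, Fintype.card_fin] at hcard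
  have hs : ∑ u ∈ π, (id u).card = 2 * π.card := by
    calc ∑ u ∈ π, (id u).card = ∑ _u ∈ π, 2 := Finset.sum_congr rfl (fun B hB => h2 B hB)
      _ = 2 * π.card := by rw [Finset.sum_const, smul_eq_mul, Nat.mul_comm]
  omega

/-- with γ-cumulants `κ_2 = 1` and `κ_l = 0` for `l ≠ 2`, the moments
`m_k = Σ_{π ∈ P(k)} W(π) Π_{B ∈ π} κ_{|B|}` satisfy `m_k = 0` for odd `k` and
`m_{2j} = Σ_{π ∈ M(2j)} (γ+1)^{roof(π)}`. -/
theorem gaussian_moments_from_gamma_cumulants (γ : ℝ) (κ : ℕ → ℝ)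
    (hκ2 : κ 2 = 1) (hκ : ∀ l : ℕ, l ≠ 2 → κ l = 0) (m : ℕ → ℝ)
    (hm : ∀ k : ℕ, m k = ∑ π ∈ setPartitions k, Wweight γ π * ∏ B ∈ π, κ B.card) :
    (∀ k : ℕ, Odd k → m k = 0) ∧
    (∀ j : ℕ, m (2 * j) = ∑ π ∈ perfectMatchings (2 * j), (γ + 1) ^ roofCount π) := by
  have key : ∀ k : ℕ, m k = ∑ π ∈ perfectMatchings k, (γ + 1) ^ roofCount π := by
    intro k
    rw [hm k]
    have hsub : perfectMatchings k ⊆ setPartitions k := Finset.filter_subset _ _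
    rw [← Finset.sum_subset hsub (fun π hπ hnπ => ?_)]
    · refine Finset.sum_congr rfl (fun π hπ => ?_)
      rw [perfectMatchings, Finset.mem_filter] at hπ
      rw [Finset.prod_eq_one (fun B hB => by rw [hπ.2 B hB, hκ2]), mul_one,
        Wweight_matching γ π hπ.2]
    · rw [perfectMatchings, Finset.mem_filter, not_and] at hnπ
      push_neg at hnπ
      obtain ⟨B, hB, hBne⟩ := hnπ hπ
      rw [Finset.prod_eq_zero hB (hκ _ hBne), mul_zero]
  constructor
  · intro k hk
    rw [key k]
    have : perfectMatchings k = ∅ := by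
      rw [Finset.eq_empty_iff_forall_notMem]
      intro π hπ
      have := card_even_of_matching π hπ
      exact (Nat.not_even_iff_odd.mpr hk) ⟨π.card, by omega⟩
    rw [this, Finset.sum_empty]
  · intro j; exact key (2 * j)
end
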